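/- Let G_u = ∂G/∂u for G(D^2u, Du, u) = F([a_{ij}]) as above. Then G_u = (1/u - u/w^2) F^{ij} a_{ij} + 2 F^{ij} a_{ik} ∇_j u ∇_k u/(u w^2) + (u/w) F^{ij}(δ_{ij} - ∇_i u ∇_j u / w^2). -/

import Mathlib

/-!
In matrix form, with `t = u`, `P = p pᵀ` and `w = √(t² + |p|²)`, we have `γ = 1 - P / (w (t + w))`
and `a = (t / w) γ (t + S) γ`. Since `w' = t / w`, one finds `γ' = P / w³`, and the algebraic
identities `γ p = (t / w) p`, `γ² = 1 - P / w²` turn the product rule into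
`a' = (1/t - t/w²) a + (P a + a P) / (t w²) + (t / w) γ²`,
because `P (t + S) γ = (w / t)² P a`. Pairing with `F^{ij}`, which commutes with the symmetric
matrix `a`, gives `P a` and `a P` the same pairing; this is the factor `2`.
-/

open Matrix

theorem hasDerivAt_sqrt_sq_add {x c : ℝ} (hx : x ^ 2 + c ≠ 0) :
    HasDerivAt (fun t => √(t ^ 2 + c)) (x / √(x ^ 2 + c)) x := by
  refine (((hasDerivAt_pow 2 x).add_const c).sqrt hx).congr_deriv ?_
  field_simp
  ring

theorem hasDerivAt_inv_mul_add {w : ℝ → ℝ} {x : ℝ} (hw : HasDerivAt w (x / w x) x)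
    (hw0 : w x ≠ 0) (hxw : x + w x ≠ 0) :
    HasDerivAt (fun t => (w t * (t + w t))⁻¹) (-(w x ^ 3)⁻¹) x := by
  have hg : HasDerivAt (fun t => w t * (t + w t))
      (x / w x * (x + w x) + w x * (1 + x / w x)) x :=
    hw.mul ((hasDerivAt_id x).add hw)
  refine (hg.fun_inv (mul_ne_zero hw0 hxw)).congr_deriv ?_
  field_simp
  ring

theorem LinearMap.apply_eq_sum_sum_single {m n R M : Type*} [Fintype m] [DecidableEq m]
    [Fintype n] [DecidableEq n] [CommSemiring R] [AddCommMonoid M] [Module R M]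
    (f : (m → n → R) →ₗ[R] M) (A : m → n → R) :
    f A = ∑ i, ∑ j, A i j • f (Pi.single i (Pi.single j 1)) := by
  have hA : A = ∑ i, ∑ j, A i j • Pi.single i (Pi.single j 1) := by
    ext i j
    simp [Finset.sum_apply, Pi.single_apply, apply_ite (fun g : n → R => g j)]
  conv_lhs => rw [hA]
  simp only [map_sum, map_smul]

namespace Matrix

section EntrywiseCalculus

variable {l m n : Type*} {𝕜 : Type*} [NontriviallyNormedField 𝕜] {x : 𝕜}

theorem hasDerivAt_mul_apply [Fintype m] {A : 𝕜 → Matrix l m 𝕜} {B : 𝕜 → Matrix m n 𝕜}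
    {A' : Matrix l m 𝕜} {B' : Matrix m n 𝕜}
    (hA : ∀ i j, HasDerivAt (fun t => A t i j) (A' i j) x)
    (hB : ∀ i j, HasDerivAt (fun t => B t i j) (B' i j) x) (i : l) (j : n) :
    HasDerivAt (fun t => (A t * B t) i j) ((A' * B x + A x * B') i j) x := by
  simp only [mul_apply, add_apply, ← Finset.sum_add_distrib]
  exact HasDerivAt.fun_sum fun k _ => (hA i k).mul (hB k j)

theorem hasDerivAt_smul_apply {c : 𝕜 → 𝕜} {A : 𝕜 → Matrix l m 𝕜} {c' : 𝕜}
    {A' : Matrix l m 𝕜} (hc : HasDerivAt c c' x)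
    (hA : ∀ i j, HasDerivAt (fun t => A t i j) (A' i j) x) (i : l) (j : m) :
    HasDerivAt (fun t => (c t • A t) i j) ((c' • A x + c x • A') i j) x := by
  simpa only [smul_apply, add_apply, smul_eq_mul] using hc.fun_mul (hA i j)

end EntrywiseCalculus

theorem sum_sum_mul_mul_vecMulVec {l m n K : Type*} [Fintype l] [Fintype m] [Fintype n]
    [CommSemiring K] (Φ : l → n → K) (A : Matrix l m K) (x : m → K) (y : n → K) :
    ∑ i, ∑ j, Φ i j * (A * vecMulVec x y) i j = ∑ i, ∑ j, ∑ k, Φ i j * A i k * y j * x k := by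
  simp only [mul_apply, vecMulVec_apply, Finset.mul_sum]
  ac_rfl

theorem sum_sum_mul_mul_comm_of_commute {n K : Type*} [Fintype n] [CommSemiring K]
    {Φ A : Matrix n n K} (hA : Aᵀ = A) (hΦA : Commute Φ A) (B : Matrix n n K) :
    ∑ i, ∑ j, Φ i j * (B * A) i j = ∑ i, ∑ j, Φ i j * (A * B) i j := by
  have h (M : Matrix n n K) : ∑ i, ∑ j, Φ i j * M i j = trace (Φᵀ * M) := by
    simp only [trace, diag, mul_apply, transpose_apply]
    exact Finset.sum_comm
  rw [h, h]
  calc trace (Φᵀ * (B * A)) = trace (A * Φᵀ * B) := by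
        rw [← mul_assoc, trace_mul_comm, mul_assoc]
    _ = trace ((Φ * A)ᵀ * B) := by rw [transpose_mul, hA]
    _ = trace ((A * Φ)ᵀ * B) := by rw [hΦA.eq]
    _ = trace (Φᵀ * (A * B)) := by rw [transpose_mul, hA, mul_assoc]

section Algebra

variable {n : Type*} [DecidableEq n] {K : Type*} [Field K]

-- The paper's `γ^{ij}` at `u = t`, `Du = p`, where `w = √(t² + |p|²)`.
def sqrtInvMetric (p : n → K) (t w : K) : Matrix n n K :=
  1 - (w * (t + w))⁻¹ • vecMulVec p p

variable {p : n → K} {S : Matrix n n K} {t w : K}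

theorem sqrtInvMetric_apply (i j : n) :
    sqrtInvMetric p t w i j = (1 : Matrix n n K) i j - p i * p j / (w * (t + w)) := by
  simp [sqrtInvMetric, vecMulVec_apply, div_eq_inv_mul]

theorem sqrtInvMetric_transpose : (sqrtInvMetric p t w)ᵀ = sqrtInvMetric p t w := by
  simp [sqrtInvMetric, transpose_vecMulVec]

variable [Fintype n]

-- The paper's `[a_{ij}]` at `u = t`, `Du = p`, `D²u = S`.
def shapeMatrix (p : n → K) (S : Matrix n n K) (t w : K) : Matrix n n K :=
  (t / w) • (sqrtInvMetric p t w * (t • 1 + S) * sqrtInvMetric p t w)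

theorem shapeMatrix_apply (i j : n) :
    shapeMatrix p S t w i j = t / w * ∑ k, ∑ l,
      sqrtInvMetric p t w i k * (t * (1 : Matrix n n K) k l + S k l) * sqrtInvMetric p t w l j := by
  simp only [shapeMatrix, smul_apply, mul_apply, add_apply, smul_eq_mul, Finset.sum_mul]
  rw [Finset.sum_comm]

theorem shapeMatrix_transpose (hS : Sᵀ = S) : (shapeMatrix p S t w)ᵀ = shapeMatrix p S t w := by
  simp [shapeMatrix, transpose_mul, sqrtInvMetric_transpose, hS, mul_assoc]

theorem sqrtInvMetric_mulVec (hw : w ^ 2 = t ^ 2 + p ⬝ᵥ p) (hw0 : w ≠ 0) (htw : t + w ≠ 0) :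
    sqrtInvMetric p t w *ᵥ p = (t / w) • p := by
  have hc : 1 - (w * (t + w))⁻¹ * (p ⬝ᵥ p) = t / w := by
    rw [show p ⬝ᵥ p = (w - t) * (t + w) by linear_combination -hw]
    field_simp
    ring
  rw [sqrtInvMetric, sub_mulVec, one_mulVec, smul_mulVec, vecMulVec_mulVec,
    op_smul_eq_smul, smul_smul, ← hc, sub_smul, one_smul]

theorem vecMulVec_mul_sqrtInvMetric (hw : w ^ 2 = t ^ 2 + p ⬝ᵥ p) (hw0 : w ≠ 0)
    (htw : t + w ≠ 0) : vecMulVec p p * sqrtInvMetric p t w = (t / w) • vecMulVec p p := by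
  rw [vecMulVec_mul, ← mulVec_transpose, sqrtInvMetric_transpose,
    sqrtInvMetric_mulVec hw hw0 htw, vecMulVec_smul]

theorem sqrtInvMetric_mul_vecMulVec (hw : w ^ 2 = t ^ 2 + p ⬝ᵥ p) (hw0 : w ≠ 0)
    (htw : t + w ≠ 0) : sqrtInvMetric p t w * vecMulVec p p = (t / w) • vecMulVec p p := by
  rw [mul_vecMulVec, sqrtInvMetric_mulVec hw hw0 htw, smul_vecMulVec]

theorem sqrtInvMetric_mul_self (hw : w ^ 2 = t ^ 2 + p ⬝ᵥ p) (hw0 : w ≠ 0)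
    (htw : t + w ≠ 0) :
    sqrtInvMetric p t w * sqrtInvMetric p t w = 1 - (w ^ 2)⁻¹ • vecMulVec p p := by
  conv_lhs => rw [sqrtInvMetric, sub_mul, one_mul, smul_mul_assoc, ← sqrtInvMetric,
    vecMulVec_mul_sqrtInvMetric hw hw0 htw, sqrtInvMetric, smul_smul, sub_sub, ← add_smul]
  congr 2
  field_simp
  ring

/-- The product-rule derivative of `shapeMatrix`, with `(t / w)' = (w² - t²) / w³` and
`γ' = P / w³`, rewritten in terms of `a = shapeMatrix` itself. -/
theorem shapeMatrix_deriv_eq (hw : w ^ 2 = t ^ 2 + p ⬝ᵥ p) (hw0 : w ≠ 0) (htw : t + w ≠ 0)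
    (ht : t ≠ 0) :
    ((w ^ 2 - t ^ 2) / w ^ 3) • (sqrtInvMetric p t w * (t • 1 + S) * sqrtInvMetric p t w)
      + (t / w) • (((w ^ 3)⁻¹ • vecMulVec p p * (t • 1 + S) + sqrtInvMetric p t w * 1)
          * sqrtInvMetric p t w
        + sqrtInvMetric p t w * (t • 1 + S) * ((w ^ 3)⁻¹ • vecMulVec p p))
    = (1 / t - t / w ^ 2) • shapeMatrix p S t w
      + (t * w ^ 2)⁻¹ • (vecMulVec p p * shapeMatrix p S t w
        + shapeMatrix p S t w * vecMulVec p p)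
      + (t / w) • (1 - (w ^ 2)⁻¹ • vecMulVec p p) := by
  rw [shapeMatrix]
  set Γ := sqrtInvMetric p t w
  set P := vecMulVec p p
  set B := t • 1 + S
  have hPa : P * (Γ * B * Γ) = (t / w) • (P * B * Γ) := by
    rw [← mul_assoc, ← mul_assoc, vecMulVec_mul_sqrtInvMetric hw hw0 htw,
      smul_mul_assoc, smul_mul_assoc]
  have haP : Γ * B * Γ * P = (t / w) • (Γ * B * P) := by
    rw [mul_assoc (Γ * B), sqrtInvMetric_mul_vecMulVec hw hw0 htw, mul_smul_comm]
  have hΓΓ : Γ * Γ = 1 - (w ^ 2)⁻¹ • P := sqrtInvMetric_mul_self hw hw0 htw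
  simp only [add_mul, mul_one, smul_mul_assoc, mul_smul_comm, hPa, haP, hΓΓ]
  match_scalars <;> field_simp

end Algebra

section Calculus

variable {n : Type*} [DecidableEq n] {p : n → ℝ} {w : ℝ → ℝ} {x : ℝ}

theorem hasDerivAt_sqrtInvMetric_apply (hw : HasDerivAt w (x / w x) x) (hw0 : w x ≠ 0)
    (hxw : x + w x ≠ 0) (i j : n) :
    HasDerivAt (fun t => sqrtInvMetric p t (w t) i j) (((w x ^ 3)⁻¹ • vecMulVec p p) i j) x := by
  simpa [sqrtInvMetric, vecMulVec_apply, mul_comm] using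
    ((hasDerivAt_inv_mul_add hw hw0 hxw).mul_const (p i * p j)).const_sub
      ((1 : Matrix n n ℝ) i j)

theorem hasDerivAt_shapeMatrix_apply [Fintype n] {S : Matrix n n ℝ}
    (hw : HasDerivAt w (x / w x) x) (hwx : w x ^ 2 = x ^ 2 + p ⬝ᵥ p) (hw0 : w x ≠ 0)
    (hxw : x + w x ≠ 0) (hx : x ≠ 0) (i j : n) :
    HasDerivAt (fun t => shapeMatrix p S t (w t) i j)
      (((1 / x - x / w x ^ 2) • shapeMatrix p S x (w x)
        + (x * w x ^ 2)⁻¹ • (vecMulVec p p * shapeMatrix p S x (w x)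
          + shapeMatrix p S x (w x) * vecMulVec p p)
        + (x / w x) • (1 - (w x ^ 2)⁻¹ • vecMulVec p p) : Matrix n n ℝ) i j) x := by
  have hc : HasDerivAt (fun t => t / w t) ((w x ^ 2 - x ^ 2) / w x ^ 3) x := by
    refine ((hasDerivAt_id' x).div hw hw0).congr_deriv ?_
    field_simp
  have hB (i j : n) : HasDerivAt (fun t => (t • 1 + S) i j) ((1 : Matrix n n ℝ) i j) x := by
    simpa using ((hasDerivAt_id x).mul_const ((1 : Matrix n n ℝ) i j)).add_const (S i j)
  have hΓ := hasDerivAt_sqrtInvMetric_apply (p := p) hw hw0 hxw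
  rw [← shapeMatrix_deriv_eq hwx hw0 hxw hx]
  exact hasDerivAt_smul_apply hc (hasDerivAt_mul_apply (hasDerivAt_mul_apply hΓ hB) hΓ) i j

end Calculus

end Matrix

/-- Formula (2.19): the derivative of `G = F([a_{ij}])` in the variable `u` is
`G_u = (1/u - u/w²) F^{ij} a_{ij} + 2 F^{ij} a_{ik} ∇_j u ∇_k u/(uw²)
      + (u/w) F^{ij}(δ_{ij} - ∇_i u ∇_j u/w²)`. -/
theorem stmt_14 (n : ℕ) (F : (Fin n → Fin n → ℝ) → ℝ)
    (u : ℝ) (hu : 0 < u) (p : Fin n → ℝ)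
    (S : Fin n → Fin n → ℝ) (hS : ∀ i j, S i j = S j i)
    (w : ℝ → ℝ) (hw : w = fun t => Real.sqrt (t ^ 2 + ∑ i, p i ^ 2))
    (γ : ℝ → Fin n → Fin n → ℝ)
    (hγ : γ = fun t i j =>
      (if i = j then (1 : ℝ) else 0) - p i * p j / (w t * (t + w t)))
    (amat : ℝ → Fin n → Fin n → ℝ)
    (ham : amat = fun t i j => (t / w t) * ∑ k, ∑ l,
      γ t i k * (t * (if k = l then (1 : ℝ) else 0) + S k l) * γ t l j)
    (LF : (Fin n → Fin n → ℝ) →L[ℝ] ℝ) (hLF : HasFDerivAt F LF (amat u))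
    (Fm : Fin n → Fin n → ℝ)
    (hFm : Fm = fun k l => LF (Pi.single k (Pi.single l 1)))
    (hcomm : Matrix.of Fm * Matrix.of (amat u) = Matrix.of (amat u) * Matrix.of Fm) :
    HasDerivAt (fun t : ℝ => F (amat t))
      ((1 / u - u / (w u) ^ 2) * (∑ i, ∑ j, Fm i j * amat u i j)
        + 2 * (∑ i, ∑ j, ∑ k, Fm i j * amat u i k * p j * p k) / (u * (w u) ^ 2)
        + (u / w u) * ∑ i, ∑ j, Fm i j *
            ((if i = j then (1 : ℝ) else 0) - p i * p j / (w u) ^ 2)) u := by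
  have hw' : w = fun t => √(t ^ 2 + p ⬝ᵥ p) := by simp only [hw, dotProduct, sq]
  have hpos : 0 < u ^ 2 + p ⬝ᵥ p :=
    add_pos_of_pos_of_nonneg (by positivity) (Finset.sum_nonneg fun i _ => mul_self_nonneg (p i))
  have hwu0 : 0 < w u := by rw [hw']; exact Real.sqrt_pos.2 hpos
  have hwu : w u ^ 2 = u ^ 2 + p ⬝ᵥ p := by rw [hw', Real.sq_sqrt hpos.le]
  have hdw : HasDerivAt w (u / w u) u := by rw [hw']; exact hasDerivAt_sqrt_sq_add hpos.ne'
  have hamat : amat = fun t => shapeMatrix p (of S) t (w t) := by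
    ext t i j
    simp only [ham, hγ, shapeMatrix_apply, sqrtInvMetric_apply, one_apply, of_apply]
  clear ham
  subst hamat
  have hD := hasDerivAt_pi.2 fun i => hasDerivAt_pi.2 fun j =>
    hasDerivAt_shapeMatrix_apply (S := of S) hdw hwu hwu0.ne' (by linarith) hu.ne' i j
  refine (hLF.comp_hasDerivAt u hD).congr_deriv ?_
  beta_reduce at hcomm ⊢
  have hrep (M : Matrix (Fin n) (Fin n) ℝ) : LF M = ∑ i, ∑ j, Fm i j * M i j := by
    simpa [hFm, mul_comm] using LF.toLinearMap.apply_eq_sum_sum_single M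
  have hPA := sum_sum_mul_mul_comm_of_commute (Φ := of Fm)
    (shapeMatrix_transpose (by ext i j; exact hS j i)) hcomm (vecMulVec p p)
  simp only [of_apply] at hPA
  rw [hrep]
  simp only [Matrix.add_apply, Matrix.smul_apply, smul_eq_mul, mul_add, Finset.sum_add_distrib,
    mul_left_comm (Fm _ _), ← Finset.mul_sum]
  rw [hPA, sum_sum_mul_mul_vecMulVec]
  simp only [Matrix.sub_apply, one_apply, Matrix.smul_apply, vecMulVec_apply, smul_eq_mul,
    ← div_eq_inv_mul]
  ring
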